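/- Let P_n be the unweighted path graph on vertex set {1, …, n} and let v be the characteristic function of the matching game MG(P_n). Let i ∈ {1, …, n} and let S ⊆ {1, …, n} \ {i} be a coalition such that i − 1 ∉ S, and such that for some m ≥ 1 the vertices i + 1, …, i + m all belong to S while i + m + 1 ∉ S (vertices outside {1, …, n} being treated as absent). Then i is pivotal for S if and only if m is odd. -/

import Mathlib

attribute [local instance] Classical.propDecidable

/-- `M` is a matching of the subgraph of the graph with edge set `E` induced by
the vertex set `S`. -/
def IsMatchingOn {V : Type*} (E : Finset (Sym2 V)) (S : Finset V) (M : Finset (Sym2 V)) : Prop :=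
  M ⊆ E ∧ (∀ e ∈ M, ¬ e.IsDiag) ∧ (∀ e ∈ M, ∀ x ∈ e, x ∈ S) ∧
    (∀ e ∈ M, ∀ f ∈ M, e ≠ f → ∀ x ∈ e, x ∉ f)

/-- Value of a coalition `S` in the weighted matching game on the graph with edge set `E` and
weights `w`: the maximum total weight of a matching in the induced subgraph on `S`. -/
noncomputable def matchVal {V : Type*} (E : Finset (Sym2 V)) (w : Sym2 V → ℝ)
    (S : Finset V) : ℝ :=
  sSup {x : ℝ | ∃ M : Finset (Sym2 V), IsMatchingOn E S M ∧ x = ∑ e ∈ M, w e}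

/-- Value of a coalition `S` in the unweighted matching game: the maximum cardinality of a
matching in the induced subgraph on `S`. -/
noncomputable def umatchVal {V : Type*} (E : Finset (Sym2 V)) (S : Finset V) : ℕ :=
  sSup {k : ℕ | ∃ M : Finset (Sym2 V), IsMatchingOn E S M ∧ k = M.card}

/-- The Shapley value of player `i` in the cooperative game with (finite) player set `N` and
characteristic function `v`. -/
noncomputable def shapley {V : Type*} [DecidableEq V] (N : Finset V) (v : Finset V → ℝ)
    (i : V) : ℝ :=
  (1 / (Nat.factorial N.card) : ℝ) *
    ∑ S ∈ (N.erase i).powerset,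
      (Nat.factorial S.card : ℝ) * (Nat.factorial (N.card - S.card - 1) : ℝ) *
        (v (insert i S) - v S)

/-- The raw Shapley value of player `i` in the cooperative game with player set `N` and
characteristic function `v`. -/
noncomputable def rawShapley {V : Type*} [DecidableEq V] (N : Finset V) (v : Finset V → ℝ)
    (i : V) : ℝ :=
  ∑ S ∈ (N.erase i).powerset,
    (Nat.factorial S.card : ℝ) * (Nat.factorial (N.card - S.card - 1) : ℝ) *
      (v (insert i S) - v S)

/-- Edge set of the path graph `P_n` on vertex set `{1, …, n}`. -/
def pathEdges (n : ℕ) : Finset (Sym2 ℕ) :=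
  (Finset.Icc 1 (n - 1)).image (fun j : ℕ => s(j, j + 1))

/-!
Removing the segment `i+1, …, i+m` from `S` leaves a coalition `R` with no path edge to the
longer segment `i, …, i+m`, because `S` avoids both `i - 1` and `i + m + 1`. The matching value
is additive over edge-separated coalitions, and a run of `k` consecutive vertices of the path has
value `⌊k/2⌋`. Hence `v(S ∪ {i}) - v(S) = ⌊(m+1)/2⌋ - ⌊m/2⌋`, which is `1` exactly when `m` is odd.
-/

open Finset

/-- Taking `x = y`, a vertex lying in both `A` and `B` must be isolated. -/
def EdgeSeparated {V : Type*} (E : Finset (Sym2 V)) (A B : Finset V) : Prop :=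
  ∀ e ∈ E, ∀ x ∈ e, ∀ y ∈ e, x ∈ A → y ∉ B

section MatchingGame

variable {V : Type*} {E : Finset (Sym2 V)} {S T : Finset V} {M N : Finset (Sym2 V)}

theorem isMatchingOn_empty : IsMatchingOn E S ∅ := by
  simp [IsMatchingOn]

theorem IsMatchingOn.of_subset (hM : IsMatchingOn E S M) (hNM : N ⊆ M)
    (hT : ∀ e ∈ N, ∀ x ∈ e, x ∈ T) : IsMatchingOn E T N :=
  ⟨hNM.trans hM.1, fun e he => hM.2.1 e (hNM he), hT,
    fun e he f hf => hM.2.2.2 e (hNM he) f (hNM hf)⟩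

theorem IsMatchingOn.union [DecidableEq V] (hM : IsMatchingOn E S M) (hN : IsMatchingOn E T N)
    (hST : EdgeSeparated E S T) : IsMatchingOn E (S ∪ T) (M ∪ N) := by
  have hcross : ∀ e ∈ M, ∀ f ∈ N, ∀ x ∈ e, x ∉ f := fun e he f hf x hxe hxf =>
    hST e (hM.1 he) x hxe x hxe (hM.2.2.1 e he x hxe) (hN.2.2.1 f hf x hxf)
  refine ⟨union_subset hM.1 hN.1, ?_, ?_, ?_⟩
  · simp only [mem_union]
    rintro e (he | he)
    exacts [hM.2.1 e he, hN.2.1 e he]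
  · simp only [mem_union]
    rintro e (he | he) x hx
    exacts [.inl (hM.2.2.1 e he x hx), .inr (hN.2.2.1 e he x hx)]
  · simp only [mem_union]
    rintro e (he | he) f (hf | hf) hef x hxe hxf
    · exact hM.2.2.2 e he f hf hef x hxe hxf
    · exact hcross e he f hf x hxe hxf
    · exact hcross f hf e he x hxf hxe
    · exact hN.2.2.2 e he f hf hef x hxe hxf

theorem IsMatchingOn.two_mul_card_le (hM : IsMatchingOn E S M) : 2 * #M ≤ #S := by
  have hdisj : (M : Set (Sym2 V)).PairwiseDisjoint Sym2.toFinset := by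
    intro e he f hf hef
    exact disjoint_left.2 fun x hxe hxf =>
      hM.2.2.2 e he f hf hef x (Sym2.mem_toFinset.1 hxe) (Sym2.mem_toFinset.1 hxf)
  calc 2 * #M = ∑ e ∈ M, #e.toFinset := by
        rw [sum_congr rfl fun e he => Sym2.card_toFinset_of_not_isDiag e (hM.2.1 e he),
          sum_const, smul_eq_mul, mul_comm]
    _ = #(M.biUnion Sym2.toFinset) := (card_biUnion hdisj).symm
    _ ≤ #S := card_le_card <| biUnion_subset.2 fun e he x hx =>
        hM.2.2.1 e he x (Sym2.mem_toFinset.1 hx)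

theorem bddAbove_matchingCards (E : Finset (Sym2 V)) (S : Finset V) :
    BddAbove {k : ℕ | ∃ M : Finset (Sym2 V), IsMatchingOn E S M ∧ k = #M} := by
  refine ⟨#E, ?_⟩
  rintro k ⟨M, hM, rfl⟩
  exact card_le_card hM.1

theorem IsMatchingOn.card_le_umatchVal (hM : IsMatchingOn E S M) : #M ≤ umatchVal E S :=
  le_csSup (bddAbove_matchingCards E S) ⟨M, hM, rfl⟩

theorem umatchVal_le {B : ℕ} (h : ∀ M, IsMatchingOn E S M → #M ≤ B) : umatchVal E S ≤ B :=
  csSup_le ⟨0, ∅, isMatchingOn_empty, rfl⟩ fun _ ⟨M, hM, hk⟩ => hk ▸ h M hM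

theorem exists_isMatchingOn_card_eq_umatchVal (E : Finset (Sym2 V)) (S : Finset V) :
    ∃ M, IsMatchingOn E S M ∧ #M = umatchVal E S := by
  obtain ⟨M, hM, hk⟩ : umatchVal E S ∈ _ :=
    Nat.sSup_mem ⟨0, ∅, isMatchingOn_empty, rfl⟩ (bddAbove_matchingCards E S)
  exact ⟨M, hM, hk.symm⟩

theorem umatchVal_union [DecidableEq V] (hST : EdgeSeparated E S T) :
    umatchVal E (S ∪ T) = umatchVal E S + umatchVal E T := by
  apply le_antisymm
  · refine umatchVal_le fun M hM => ?_
    have hT : ∀ e ∈ M.filter (fun e => ¬ ∀ x ∈ e, x ∈ S), ∀ x ∈ e, x ∈ T := by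
      simp only [mem_filter, not_forall]
      rintro e ⟨he, y, hy, hyS⟩ x hx
      have hyT : y ∈ T := (mem_union.1 (hM.2.2.1 e he y hy)).resolve_left hyS
      exact (mem_union.1 (hM.2.2.1 e he x hx)).resolve_left
        fun hxS => hST e (hM.1 he) x hx y hy hxS hyT
    calc #M = #(M.filter fun e => ∀ x ∈ e, x ∈ S) + #(M.filter fun e => ¬ ∀ x ∈ e, x ∈ S) :=
          (card_filter_add_card_filter_not _).symm
      _ ≤ umatchVal E S + umatchVal E T := Nat.add_le_add
          (hM.of_subset (filter_subset _ _) fun e he => (mem_filter.1 he).2).card_le_umatchVal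
          (hM.of_subset (filter_subset _ _) hT).card_le_umatchVal
  · obtain ⟨MS, hMS, hcS⟩ := exists_isMatchingOn_card_eq_umatchVal E S
    obtain ⟨MT, hMT, hcT⟩ := exists_isMatchingOn_card_eq_umatchVal E T
    have hdisj : Disjoint MS MT := disjoint_left.2 fun e heS heT =>
      hST e (hMS.1 heS) _ (Sym2.out_fst_mem e) _ (Sym2.out_fst_mem e)
        (hMS.2.2.1 e heS _ (Sym2.out_fst_mem e)) (hMT.2.2.1 e heT _ (Sym2.out_fst_mem e))
    calc umatchVal E S + umatchVal E T = #(MS ∪ MT) := by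
          rw [card_union_of_disjoint hdisj, hcS, hcT]
      _ ≤ umatchVal E (S ∪ T) := (hMS.union hMT hST).card_le_umatchVal

end MatchingGame

section PathGraph

theorem mem_pathEdges {n : ℕ} {e : Sym2 ℕ} :
    e ∈ pathEdges n ↔ ∃ j, 1 ≤ j ∧ j + 1 ≤ n ∧ e = s(j, j + 1) := by
  simp only [pathEdges, mem_image, mem_Icc]
  constructor
  · rintro ⟨j, ⟨h1, h2⟩, rfl⟩
    exact ⟨j, h1, by omega, rfl⟩
  · rintro ⟨j, h1, h2, rfl⟩
    exact ⟨j, ⟨h1, by omega⟩, rfl⟩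

theorem edgeSeparated_pathEdges_Icc {n a b : ℕ} {A : Finset ℕ}
    (hA : ∀ x ∈ A, x + 1 < a ∨ b + 1 < x) : EdgeSeparated (pathEdges n) A (Icc a b) := by
  intro e he x hx y hy hxA hyI
  obtain ⟨j, -, -, rfl⟩ := mem_pathEdges.1 he
  have := hA x hxA
  rw [mem_Icc] at hyI
  rw [Sym2.mem_iff] at hx hy
  omega

def pairsFrom (a k : ℕ) : Finset (Sym2 ℕ) :=
  (range k).image fun j => s(a + 2 * j, a + 2 * j + 1)

theorem card_pairsFrom (a k : ℕ) : #(pairsFrom a k) = k := by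
  refine (card_image_of_injective _ fun j j' h => ?_).trans (card_range k)
  rw [Sym2.eq_iff] at h
  omega

theorem isMatchingOn_pairsFrom {n a b k : ℕ} (ha : 1 ≤ a) (hb : b ≤ n) (hk : 2 * k ≤ b + 1 - a) :
    IsMatchingOn (pathEdges n) (Icc a b) (pairsFrom a k) := by
  simp only [IsMatchingOn, pairsFrom, forall_mem_image, mem_range]
  refine ⟨image_subset_iff.2 fun j hj => ?_, fun j _ => ?_, fun j hj x hx => ?_,
    fun j _ j' _ hjj' x hx hx' => ?_⟩
  · have := mem_range.1 hj
    exact mem_pathEdges.2 ⟨a + 2 * j, by omega, by omega, rfl⟩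
  · simp [Sym2.mk_isDiag_iff]
  · rw [Sym2.mem_iff] at hx
    rw [mem_Icc]
    omega
  · have : j ≠ j' := fun h => hjj' (h ▸ rfl)
    rw [Sym2.mem_iff] at hx hx'
    omega

theorem umatchVal_pathEdges_Icc {n a b : ℕ} (ha : 1 ≤ a) (hb : b ≤ n) :
    umatchVal (pathEdges n) (Icc a b) = (b + 1 - a) / 2 := by
  apply le_antisymm
  · refine umatchVal_le fun M hM => ?_
    have := hM.two_mul_card_le
    rw [Nat.card_Icc] at this
    omega
  · calc (b + 1 - a) / 2 = #(pairsFrom a ((b + 1 - a) / 2)) := (card_pairsFrom _ _).symm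
      _ ≤ _ := (isMatchingOn_pairsFrom ha hb (by omega)).card_le_umatchVal

end PathGraph

theorem pivotal_path_right_segment_general (n : ℕ) (i : ℕ) (hi : i ∈ Finset.Icc 1 n)
    (S : Finset ℕ) (hS : S ⊆ Finset.Icc 1 n) (hiS : i ∉ S)
    (hleft : i - 1 ∉ S)
    (m : ℕ)
    (hseg : ∀ t, 1 ≤ t → t ≤ m → i + t ∈ S)
    (hend : i + m + 1 ∉ S) :
    (umatchVal (pathEdges n) (insert i S) = umatchVal (pathEdges n) S + 1) ↔ Odd m := by
  rw [mem_Icc] at hi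
  have hsegS : Icc (i + 1) (i + m) ⊆ S := fun x hx => by
    obtain ⟨t, rfl⟩ : ∃ t, x = i + t := ⟨x - i, by grind⟩
    exact hseg t (by grind) (by grind)
  have hin : i + m ≤ n := by
    rcases m.eq_zero_or_pos with rfl | hm
    · simpa using hi.2
    · exact (mem_Icc.1 (hS (hseg m hm le_rfl))).2
  set R := S \ Icc (i + 1) (i + m)
  have hR : ∀ x ∈ R, x + 1 < i ∨ i + m + 1 < x := by
    intro x hx
    obtain ⟨hxS, hxI⟩ := mem_sdiff.1 hx
    have := ne_of_mem_of_not_mem hxS hiS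
    have := ne_of_mem_of_not_mem hxS hleft
    have := ne_of_mem_of_not_mem hxS hend
    rw [mem_Icc] at hxI
    omega
  have hS_eq : S = R ∪ Icc (i + 1) (i + m) := (sdiff_union_of_subset hsegS).symm
  have hinsert_eq : insert i S = R ∪ Icc i (i + m) := by
    rw [hS_eq, ← union_insert, insert_Icc_add_one_left_eq_Icc (Nat.le_add_right i m)]
  rw [hinsert_eq, hS_eq, umatchVal_union (edgeSeparated_pathEdges_Icc hR),
    umatchVal_union (edgeSeparated_pathEdges_Icc fun x hx => (hR x hx).imp (by omega) id),
    umatchVal_pathEdges_Icc hi.1 hin, umatchVal_pathEdges_Icc (by omega) hin, Nat.odd_iff]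
  omega

/-- In the matching game on the path `P_n`, if the coalition `S` does not
contain `i - 1`, contains the segment `i+1, …, i+m` (`m ≥ 1`) and does not contain `i+m+1`,
then `i` is pivotal for `S` iff `m` is odd. -/
theorem pivotal_path_right_segment (n : ℕ) (i : ℕ) (hi : i ∈ Finset.Icc 1 n)
    (S : Finset ℕ) (hS : S ⊆ Finset.Icc 1 n) (hiS : i ∉ S)
    (hleft : i - 1 ∉ S)
    (m : ℕ) (hm : 1 ≤ m)
    (hseg : ∀ t, 1 ≤ t → t ≤ m → i + t ∈ S)
    (hend : i + m + 1 ∉ S) :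
    (umatchVal (pathEdges n) (insert i S) = umatchVal (pathEdges n) S + 1) ↔ Odd m :=
  pivotal_path_right_segment_general n i hi S hS hiS hleft m hseg hend
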